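/- Let X be a compact metric space of finite upper Minkowski dimension d. Then the upper Minkowski critical parameter of W_2(X) in the power-exponential scale is at most d; in particular, for all t > d, the covering numbers satisfy log N(W_2(X), ε) = O((1/ε)^t) as ε → 0, so crit_P(W_2(X)) ≤ d. -/

import Mathlib

open MeasureTheory ENNReal

/-- `π` is a coupling of `μ` and `ν`. -/
def IsCoupling {X : Type*} [MeasurableSpace X] (μ ν : Measure X)
    (π : Measure (X × X)) : Prop :=
  π.map Prod.fst = μ ∧ π.map Prod.snd = ν

/-- The `L^p` Wasserstein distance between two measures, as the infimal `p`-cost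
over all couplings, to the power `1/p`. -/
noncomputable def Wp {X : Type*} [MetricSpace X] [MeasurableSpace X]
    (p : ℝ) (μ ν : Measure X) : ℝ≥0∞ :=
  (⨅ (π : Measure (X × X)) (_ : IsCoupling μ ν π),
    ∫⁻ z, ENNReal.ofReal (dist z.1 z.2 ^ p) ∂π) ^ (1 / p)

open Filter Topology

/-- The minimal number of balls of radius `ε` needed to cover `A`. -/
noncomputable def coverNum {X : Type*} [MetricSpace X] (A : Set X) (ε : ℝ) : ℕ :=
  sInf {n | ∃ t : Finset X, t.card = n ∧ A ⊆ ⋃ x ∈ t, Metric.ball x ε}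

/-- The minimal number of `W_p`-balls of radius `ε` needed to cover the space of
probability measures on `X`. -/
noncomputable def coverNumW (X : Type*) [MetricSpace X] [MeasurableSpace X]
    (p : ℝ) (ε : ℝ) : ℕ :=
  sInf {n | ∃ T : Finset (ProbabilityMeasure X), T.card = n ∧
    ∀ μ : ProbabilityMeasure X, ∃ ν ∈ T,
      Wp p (μ : Measure X) (ν : Measure X) ≤ ENNReal.ofReal ε}

/-!
Cover `X` by `n = N(X, ε/2)` balls and quantize with a Borel nearest-centre map. A probability
measure `μ` is transported, at `W₂²`-cost at most `(ε/2)² + (diam X)² n / M`, onto the measure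
carrying the rounded-down fibre masses `⌊M μ(fibre)⌋ / M` at the centres and the leftover mass at
one fixed point. These measures form an `ε`-net of `W₂(X)` of size at most `(M + 1)ⁿ` with
`M ≈ n (diam X / ε)²`, so `log N(W₂(X), ε) ≲ n log(1/ε) ≲ (1/ε)^d' log(1/ε)` for every `d' > d`,
which is `O((1/ε)^t)` for `t > d`; and then `N(W₂(X), ε) exp(-(1/ε)^s) ≤ 1` eventually for `s > d`.
-/

open Set Metric ProbabilityTheory
open scoped NNReal

section Wasserstein

variable {X : Type*} [MetricSpace X] [MeasurableSpace X]

lemma Wp_le_of_isCoupling {p ε : ℝ} (hp : 0 < p) (hε : 0 ≤ ε) {μ ν : Measure X}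
    {π : Measure (X × X)} (hπ : IsCoupling μ ν π)
    (hcost : ∫⁻ z, ENNReal.ofReal (dist z.1 z.2 ^ p) ∂π ≤ ENNReal.ofReal (ε ^ p)) :
    Wp p μ ν ≤ ENNReal.ofReal ε := by
  calc Wp p μ ν ≤ ENNReal.ofReal (ε ^ p) ^ (1 / p) :=
        ENNReal.rpow_le_rpow ((iInf₂_le π hπ).trans hcost) (by positivity)
    _ = ENNReal.ofReal ε := by
        rw [ENNReal.ofReal_rpow_of_nonneg (by positivity) (by positivity),
          ← Real.rpow_mul hε, mul_one_div_cancel hp.ne', Real.rpow_one]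

lemma coverNumW_le_card {ι : Type*} [Fintype ι] {p ε : ℝ} (F : ι → Measure X)
    (hF : ∀ μ : ProbabilityMeasure X, ∃ i, IsProbabilityMeasure (F i) ∧
      Wp p (μ : Measure X) (F i) ≤ ENNReal.ofReal ε) :
    coverNumW X p ε ≤ Fintype.card ι := by
  classical
  let S := Finset.univ.filter fun i => IsProbabilityMeasure (F i)
  let T : Finset (ProbabilityMeasure X) :=
    S.attach.image fun i : {i // i ∈ S} => ⟨F i.1, (Finset.mem_filter.1 i.2).2⟩
  have hT : ∀ μ : ProbabilityMeasure X, ∃ ν ∈ T,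
      Wp p (μ : Measure X) (ν : Measure X) ≤ ENNReal.ofReal ε := fun μ => by
    obtain ⟨i, hi, hμi⟩ := hF μ
    exact ⟨⟨F i, hi⟩, Finset.mem_image.2 ⟨⟨i, by simpa [S] using hi⟩, Finset.mem_attach _ _, rfl⟩,
      hμi⟩
  calc coverNumW X p ε ≤ T.card := Nat.sInf_le ⟨T, rfl, hT⟩
    _ ≤ S.attach.card := Finset.card_image_le
    _ ≤ Fintype.card ι := by rw [Finset.card_attach]; exact Finset.card_le_univ S

lemma coverNumW_eq_zero [IsEmpty X] (p ε : ℝ) : coverNumW X p ε = 0 :=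
  Nat.sInf_eq_zero.2 <| .inl ⟨∅, rfl, fun μ => isEmptyElim μ.nonempty.some⟩

end Wasserstein

section Coupling

variable {X ι : Type*} [MeasurableSpace X] [Fintype ι] [MeasurableSpace ι]
  [MeasurableSingletonClass ι]

lemma lintegral_comp_eq_sum (μ : Measure X) {f : X → ι} (hf : Measurable f) (g : ι → ℝ≥0∞) :
    ∫⁻ x, g (f x) ∂μ = ∑ i, μ (f ⁻¹' {i}) * g i := by
  rw [← lintegral_map (measurable_of_countable g) hf, lintegral_fintype]
  simp_rw [Measure.map_apply hf (measurableSet_singleton _), mul_comm]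

lemma exists_isCoupling_sum_smul (μ : Measure X) [SFinite μ] {f : X → ι} (hf : Measurable f)
    (ρ : ι → Measure X) [∀ i, IsProbabilityMeasure (ρ i)] :
    ∃ π, IsCoupling μ (∑ i, μ (f ⁻¹' {i}) • ρ i) π ∧ ∀ c : X × X → ℝ≥0∞, Measurable c →
      ∫⁻ z, c z ∂π = ∫⁻ x, ∫⁻ y, c (x, y) ∂ρ (f x) ∂μ := by
  let κ : Kernel X X := (Kernel.ofFunOfCountable ρ).comap f hf
  have : IsMarkovKernel κ := ⟨fun x => by dsimp [κ, Kernel.ofFunOfCountable]; infer_instance⟩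
  refine ⟨μ ⊗ₘ κ, ⟨Measure.fst_compProd μ κ, ?_⟩, fun c hc => Measure.lintegral_compProd hc⟩
  ext s hs
  rw [← Measure.snd, Measure.snd_compProd, Measure.bind_apply hs κ.measurable.aemeasurable]
  simpa [κ, Kernel.ofFunOfCountable, Measure.finsetSum_apply] using
    lintegral_comp_eq_sum μ hf (ρ · s)

end Coupling

section DiracCombination

variable {X ι : Type*} [MeasurableSpace X] [Fintype ι]

noncomputable def diracCombination (x : ι → X) (x₀ : X) (w : ι → ℝ≥0∞) : Measure X :=
  ∑ i, w i • Measure.dirac (x i) + (1 - ∑ i, w i) • Measure.dirac x₀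

lemma isProbabilityMeasure_diracCombination (x : ι → X) (x₀ : X) {w : ι → ℝ≥0∞}
    (hw : ∑ i, w i ≤ 1) : IsProbabilityMeasure (diracCombination x x₀ w) :=
  ⟨by simp [diracCombination, add_tsub_cancel_of_le hw]⟩

variable [MeasurableSpace ι] [MeasurableSingletonClass ι] [MetricSpace X] [BorelSpace X]
  [SecondCountableTopology X]

lemma exists_isCoupling_diracCombination (μ : Measure X) [IsProbabilityMeasure μ]
    {f : X → ι} (hf : Measurable f) (x : ι → X) (x₀ : X) {w : ι → ℝ≥0∞}
    (hw : ∀ i, w i ≤ μ (f ⁻¹' {i})) {p r D : ℝ} (hr : ∀ z, dist z (x (f z)) ≤ r)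
    (hD : ∀ z y : X, dist z y ≤ D) (hp : 0 < p) :
    ∃ π, IsCoupling μ (diracCombination x x₀ w) π ∧
      ∫⁻ z, ENNReal.ofReal (dist z.1 z.2 ^ p) ∂π ≤
        ENNReal.ofReal (r ^ p) + ENNReal.ofReal (D ^ p) * ∑ i, (μ (f ⁻¹' {i}) - w i) := by
  set P := fun i => μ (f ⁻¹' {i})
  -- the fraction of the fibre over `i` that is sent to `x i`; the rest goes to `x₀`
  set θ := fun i => w i / P i
  have hθ : ∀ i, θ i ≤ 1 := fun i => ENNReal.div_le_of_le_mul (by simpa using hw i)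
  have hPθ : ∀ i, P i * θ i = w i := by
    intro i
    rcases eq_or_ne (P i) 0 with h | h
    · simp [h, le_antisymm ((hw i).trans h.le) bot_le]
    · exact ENNReal.mul_div_cancel h (measure_ne_top _ _)
  have hPθ' : ∀ i, P i * (1 - θ i) = P i - w i := fun i => by
    rw [ENNReal.mul_sub fun _ _ => measure_ne_top _ _, mul_one, hPθ]
  have hsumP : ∑ i, P i = 1 := by
    rw [sum_measure_preimage_singleton _ fun i _ => hf (measurableSet_singleton i)]
    simp
  let ρ i := θ i • Measure.dirac (x i) + (1 - θ i) • Measure.dirac x₀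
  have : ∀ i, IsProbabilityMeasure (ρ i) := fun i =>
    ⟨by simp [ρ, add_tsub_cancel_of_le (hθ i)]⟩
  obtain ⟨π, hπ, hcost⟩ := exists_isCoupling_sum_smul μ hf ρ
  have htarget : ∑ i, P i • ρ i = diracCombination x x₀ w := by
    have hsub : ∑ i, (P i - w i) = 1 - ∑ i, w i := by
      refine ENNReal.eq_sub_of_add_eq ?_ ?_
      · exact ne_top_of_le_ne_top ENNReal.one_ne_top (hsumP ▸ Finset.sum_le_sum fun i _ => hw i)
      · rw [← Finset.sum_add_distrib, ← hsumP]
        exact Finset.sum_congr rfl fun i _ => tsub_add_cancel_of_le (hw i)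
    simp only [ρ, smul_add, smul_smul, hPθ, hPθ', Finset.sum_add_distrib, ← Finset.sum_smul, hsub]
    rfl
  refine ⟨π, htarget ▸ hπ, ?_⟩
  set R := ENNReal.ofReal (r ^ p)
  set Δ := ENNReal.ofReal (D ^ p)
  have hpoint : ∀ z, ∫⁻ y, ENNReal.ofReal (dist z y ^ p) ∂ρ (f z) ≤ R + Δ * (1 - θ (f z)) := by
    intro z
    simp only [ρ, lintegral_add_measure, lintegral_smul_measure, lintegral_dirac, smul_eq_mul]
    calc θ (f z) * ENNReal.ofReal (dist z (x (f z)) ^ p)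
          + (1 - θ (f z)) * ENNReal.ofReal (dist z x₀ ^ p) ≤ 1 * R + (1 - θ (f z)) * Δ := by
          gcongr
          exacts [hθ _, ENNReal.ofReal_le_ofReal (by gcongr; exact hr z),
            ENNReal.ofReal_le_ofReal (by gcongr; exact hD z x₀)]
      _ = R + Δ * (1 - θ (f z)) := by ring
  calc ∫⁻ z, ENNReal.ofReal (dist z.1 z.2 ^ p) ∂π
      = ∫⁻ z, ∫⁻ y, ENNReal.ofReal (dist z y ^ p) ∂ρ (f z) ∂μ :=
        hcost _ (ENNReal.measurable_ofReal.comp (measurable_dist.pow_const p))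
    _ ≤ ∫⁻ z, (R + Δ * (1 - θ (f z))) ∂μ := lintegral_mono hpoint
    _ = ∑ i, P i * (R + Δ * (1 - θ i)) := lintegral_comp_eq_sum μ hf fun i => R + Δ * (1 - θ i)
    _ = R + Δ * ∑ i, (P i - w i) := by
        simp only [mul_add, Finset.sum_add_distrib, ← Finset.sum_mul, hsumP, one_mul,
          mul_left_comm (P _), hPθ', Finset.mul_sum]

end DiracCombination

section Net

variable {X : Type*} [MetricSpace X] [MeasurableSpace X]

lemma ENNReal.exists_nat_div_le {x : ℝ≥0∞} (hx : x ≤ 1) {M : ℕ} (hM : 0 < M) :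
    ∃ m ≤ M, (m : ℝ≥0∞) / M ≤ x ∧ x - m / M ≤ 1 / M := by
  lift x to ℝ≥0 using ne_top_of_le_ne_top ENNReal.one_ne_top hx
  have hM0 : (M : ℝ≥0∞) ≠ 0 := by exact_mod_cast hM.ne'
  refine ⟨⌊(M : ℝ≥0) * x⌋₊, Nat.floor_le_of_le ?_, ?_, ?_⟩
  · exact mul_le_of_le_one_right (by positivity) (by exact_mod_cast hx)
  · rw [ENNReal.div_le_iff hM0 (ENNReal.natCast_ne_top M)]
    exact_mod_cast (Nat.floor_le (by positivity : (0 : ℝ≥0) ≤ M * x)).trans_eq (mul_comm _ _)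
  · rw [tsub_le_iff_right, ENNReal.div_add_div_same,
      ENNReal.le_div_iff_mul_le (.inl hM0) (.inl (ENNReal.natCast_ne_top M)), mul_comm, add_comm]
    exact_mod_cast (Nat.lt_floor_add_one ((M : ℝ≥0) * x)).le
lemma exists_measurable_dist_lt [OpensMeasurableSpace X] [Nonempty X] {r : ℝ} (t : Finset X)
    (ht : univ ⊆ ⋃ y ∈ t, ball y r) : ∃ f : X → t, Measurable f ∧ ∀ z : X, dist z (f z) < r := by
  classical
  obtain ⟨y₀, hy₀⟩ : t.Nonempty := by
    obtain ⟨y, hy, -⟩ := mem_iUnion₂.1 (ht (mem_univ (Classical.arbitrary X)))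
    exact ⟨y, hy⟩
  let e : ℕ → X := fun k => if h : k < t.card then t.equivFin.symm ⟨k, h⟩ else y₀
  have he : ∀ k, e k ∈ t := fun k => by
    unfold e
    split_ifs
    exacts [Subtype.prop _, hy₀]
  let g := SimpleFunc.nearestPt e t.card
  refine ⟨fun z => ⟨g z, he _⟩, g.measurable.subtype_mk, fun z => ?_⟩
  obtain ⟨y, hy, hzy⟩ := mem_iUnion₂.1 (ht (mem_univ z))
  have hle := SimpleFunc.edist_nearestPt_le e z (Fin.is_lt (t.equivFin ⟨y, hy⟩)).le
  simp only [e, Fin.is_lt, dite_true, Fin.eta, Equiv.symm_apply_apply, edist_dist] at hle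
  rw [dist_comm]
  exact (ENNReal.ofReal_le_ofReal_iff dist_nonneg).1 hle |>.trans_lt (mem_ball'.1 hzy)

lemma coverNumW_le_of_cover [CompactSpace X] [BorelSpace X] [Nonempty X] {p r ε : ℝ}
    (hp : 0 < p) (hε : 0 ≤ ε) (t : Finset X) (ht : univ ⊆ ⋃ y ∈ t, ball y r) {M : ℕ}
    (hM : 0 < M) (hrε : r ^ p + diam (univ : Set X) ^ p * t.card / M ≤ ε ^ p) :
    coverNumW X p ε ≤ (M + 1) ^ t.card := by
  classical
  obtain ⟨f, hf, hfr⟩ := exists_measurable_dist_lt t ht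
  obtain ⟨x₀⟩ := ‹Nonempty X›
  have hr : 0 < r := dist_nonneg.trans_lt (hfr x₀)
  have hD : ∀ z y : X, dist z y ≤ diam (univ : Set X) := fun z y =>
    dist_le_diam_of_mem isCompact_univ.isBounded trivial trivial
  let F : (t → Fin (M + 1)) → Measure X := fun m =>
    diracCombination Subtype.val x₀ fun i => ((m i : ℕ) : ℝ≥0∞) / M
  refine (coverNumW_le_card F fun μ => ?_).trans (by simp)
  choose m hmM hm using fun i : t =>
    ENNReal.exists_nat_div_le (prob_le_one (μ := (μ : Measure X)) (s := f ⁻¹' {i})) hM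
  have hsum : ∑ i, (m i : ℝ≥0∞) / M ≤ 1 := by
    refine (Finset.sum_le_sum fun i _ => (hm i).1).trans ?_
    rw [sum_measure_preimage_singleton _ fun i _ => hf (measurableSet_singleton i)]
    exact prob_le_one
  obtain ⟨π, hπ, hcost⟩ := exists_isCoupling_diracCombination (μ : Measure X) hf Subtype.val x₀
    (fun i => (hm i).1) (fun z => (hfr z).le) hD hp
  refine ⟨fun i => ⟨m i, Nat.lt_succ_of_le (hmM i)⟩,
    isProbabilityMeasure_diracCombination _ _ hsum, Wp_le_of_isCoupling hp hε hπ (hcost.trans ?_)⟩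
  have hsum' : ∑ i, ((μ : Measure X) (f ⁻¹' {i}) - (m i : ℝ≥0∞) / M) ≤ t.card / M := by
    simpa [div_eq_mul_inv] using Finset.sum_le_card_nsmul Finset.univ _ _ fun i _ => (hm i).2
  calc ENNReal.ofReal (r ^ p) + ENNReal.ofReal (diam (univ : Set X) ^ p) *
        ∑ i, ((μ : Measure X) (f ⁻¹' {i}) - (m i : ℝ≥0∞) / M)
      ≤ ENNReal.ofReal (r ^ p) + ENNReal.ofReal (diam (univ : Set X) ^ p) * (t.card / M) := by
        gcongr
    _ = ENNReal.ofReal (r ^ p + diam (univ : Set X) ^ p * t.card / M) := by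
        have hD0 : 0 ≤ diam (univ : Set X) ^ p := Real.rpow_nonneg diam_nonneg p
        rw [mul_div_assoc, ENNReal.ofReal_add (by positivity) (by positivity),
          ENNReal.ofReal_mul hD0, ENNReal.ofReal_div_of_pos (by positivity),
          ENNReal.ofReal_natCast, ENNReal.ofReal_natCast]
    _ ≤ ENNReal.ofReal (ε ^ p) := ENNReal.ofReal_le_ofReal hrε

end Net

lemma log_le_of_le_pow {N n L : ℕ} {v K a δ : ℝ} (hv : 1 ≤ v) (hK : 1 ≤ K) (ha : 0 ≤ a)
    (hδ : 0 < δ) (hN : N ≤ (n * L + 1) ^ n) (hn : (n : ℝ) ≤ v ^ a) (hL : (L : ℝ) ≤ K * v ^ 2) :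
    Real.log N ≤ (2 * K) ^ δ / δ * v ^ (a + (a + 2) * δ) := by
  have hv0 : 0 < v := by linarith
  have hM : (n * L + 1 : ℝ) ≤ 2 * K * v ^ (a + 2) := by
    have hva : 1 ≤ v ^ a := Real.one_le_rpow hv ha
    have hv2 : 1 ≤ v ^ 2 := one_le_pow₀ hv
    rw [Real.rpow_add hv0, Real.rpow_two]
    nlinarith [mul_le_mul hn hL (Nat.cast_nonneg _) (by positivity),
      one_le_mul_of_one_le_of_one_le hK (one_le_mul_of_one_le_of_one_le hva hv2)]
  rcases Nat.eq_zero_or_pos N with rfl | hN0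
  · simp only [CharP.cast_eq_zero, Real.log_zero]
    positivity
  calc Real.log N ≤ Real.log (((n * L + 1) ^ n : ℕ) : ℝ) :=
        Real.log_le_log (by exact_mod_cast hN0) (by exact_mod_cast hN)
    _ = n * Real.log (n * L + 1) := by push_cast; rw [Real.log_pow]
    _ ≤ v ^ a * ((2 * K * v ^ (a + 2)) ^ δ / δ) := by
        gcongr
        · exact Real.log_nonneg (le_add_of_nonneg_left (by positivity))
        · exact (Real.log_le_rpow_div (by positivity) hδ).trans (by gcongr)
    _ = (2 * K) ^ δ / δ * v ^ (a + (a + 2) * δ) := by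
        rw [Real.mul_rpow (by positivity) (by positivity), ← Real.rpow_mul hv0.le,
          Real.rpow_add hv0 a]
        ring

section Asymptotics

variable {X : Type*} [MetricSpace X] [CompactSpace X]

lemma exists_finset_card_eq_coverNum {r : ℝ} (hr : 0 < r) :
    ∃ t : Finset X, t.card = coverNum (univ : Set X) r ∧ univ ⊆ ⋃ y ∈ t, ball y r := by
  obtain ⟨t, ht⟩ := isCompact_univ.elim_finite_subcover (fun y : X => ball y r)
    (fun _ => isOpen_ball) fun y _ => mem_iUnion.2 ⟨y, mem_ball_self hr⟩
  exact Nat.sInf_mem (s := {n | ∃ t : Finset X, t.card = n ∧ univ ⊆ ⋃ y ∈ t, ball y r})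
    ⟨t.card, t, rfl, ht⟩

variable [MeasurableSpace X] [BorelSpace X]

lemma exists_coverNumW_two_le [Nonempty X] {ε : ℝ} (hε : 0 < ε) (hε2 : ε ≤ 2) :
    ∃ L : ℕ, (L : ℝ) ≤ (diam (univ : Set X) ^ 2 + 2) * (2 / ε) ^ 2 ∧
      coverNumW X 2 ε ≤
        (coverNum (univ : Set X) (ε / 2) * L + 1) ^ coverNum (univ : Set X) (ε / 2) := by
  obtain ⟨t, htn, ht⟩ := exists_finset_card_eq_coverNum (X := X) (half_pos hε)
  have hn : 0 < t.card := by
    obtain ⟨y, hy, -⟩ := mem_iUnion₂.1 (ht (mem_univ (Classical.arbitrary X)))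
    exact Finset.card_pos.2 ⟨y, hy⟩
  set D := diam (univ : Set X)
  have hv : 1 ≤ (2 / ε) ^ 2 := one_le_pow₀ ((one_le_div hε).2 hε2)
  have hceil := Nat.ceil_lt_add_one (by positivity : 0 ≤ D ^ 2 * (2 / ε) ^ 2)
  set L := ⌈D ^ 2 * (2 / ε) ^ 2⌉₊ + 1
  refine ⟨L, by push_cast [L]; nlinarith, ?_⟩
  rw [← htn]
  refine coverNumW_le_of_cover two_pos hε.le t ht (Nat.mul_pos hn (Nat.succ_pos _)) ?_
  have hL : D ^ 2 ≤ L * (ε / 2) ^ 2 := by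
    have : D ^ 2 = D ^ 2 * (2 / ε) ^ 2 * (ε / 2) ^ 2 := by field_simp
    rw [this]
    gcongr
    exact (Nat.le_ceil _).trans (by push_cast [L]; linarith)
  have hL0 : (0 : ℝ) < L := by positivity
  have hn0 : (0 : ℝ) < t.card := by exact_mod_cast hn
  simp only [Real.rpow_two, Nat.cast_mul]
  calc (ε / 2) ^ 2 + D ^ 2 * t.card / (t.card * L) = (ε / 2) ^ 2 + D ^ 2 / L := by
        field_simp
    _ ≤ (ε / 2) ^ 2 + (ε / 2) ^ 2 := by
        gcongr
        rwa [div_le_iff₀ hL0, mul_comm]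
    _ ≤ ε ^ 2 := by nlinarith

lemma log_coverNumW_two_le {ε a δ : ℝ} (hε : 0 < ε) (hε2 : ε ≤ 2) (ha : 0 ≤ a) (hδ : 0 < δ)
    (hn : (coverNum (univ : Set X) (ε / 2) : ℝ) ≤ (2 / ε) ^ a) :
    Real.log (coverNumW X 2 ε) ≤
      (2 * (diam (univ : Set X) ^ 2 + 2)) ^ δ / δ * (2 / ε) ^ (a + (a + 2) * δ) := by
  rcases isEmpty_or_nonempty X with hX | hX
  · rw [coverNumW_eq_zero, Nat.cast_zero, Real.log_zero]
    positivity
  obtain ⟨L, hL, hN⟩ := exists_coverNumW_two_le (X := X) hε hε2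
  exact log_le_of_le_pow ((one_le_div hε).2 hε2) (by nlinarith [sq_nonneg (diam (univ : Set X))])
    ha hδ hN hn hL

end Asymptotics

lemma sInf_le_of_log_le {N : ℝ → ℕ} {d : ℝ} (hd : 0 ≤ d)
    (h : ∀ t, d < t → ∃ C, ∀ᶠ ε in 𝓝[>] (0 : ℝ), Real.log (N ε) ≤ C * (1 / ε) ^ t) :
    sInf {s : ℝ | 0 < s ∧ liminf (fun ε : ℝ =>
        (N ε : ℝ≥0∞) * ENNReal.ofReal (Real.exp (-(1 / ε) ^ s))) (𝓝[>] (0 : ℝ)) < ⊤} ≤ d := by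
  refine le_of_forall_pos_le_add fun η hη => csInf_le ⟨0, fun s hs => hs.1.le⟩ ⟨by positivity, ?_⟩
  obtain ⟨C, hC⟩ := h (d + η / 2) (by linarith)
  have hpow : ∀ᶠ ε in 𝓝[>] (0 : ℝ), C ≤ (1 / ε) ^ (η / 2) := by
    simpa only [one_div, Function.comp_apply] using
      ((tendsto_rpow_atTop (half_pos hη)).comp tendsto_inv_nhdsGT_zero).eventually_ge_atTop C
  have hle : ∀ᶠ ε in 𝓝[>] (0 : ℝ),
      (N ε : ℝ≥0∞) * ENNReal.ofReal (Real.exp (-(1 / ε) ^ (d + η))) ≤ 1 := by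
    filter_upwards [hC, hpow, self_mem_nhdsWithin] with ε hlog hCε hε
    have hu : 0 < 1 / ε := one_div_pos.2 hε
    have hlog' : Real.log (N ε) ≤ (1 / ε) ^ (d + η) := by
      calc Real.log (N ε) ≤ C * (1 / ε) ^ (d + η / 2) := hlog
        _ ≤ (1 / ε) ^ (η / 2) * (1 / ε) ^ (d + η / 2) := by gcongr
        _ = (1 / ε) ^ (d + η) := by rw [← Real.rpow_add hu]; ring_nf
    rw [← ENNReal.ofReal_natCast, ← ENNReal.ofReal_mul (Nat.cast_nonneg _), ← ENNReal.ofReal_one]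
    refine ENNReal.ofReal_le_ofReal ?_
    calc (N ε : ℝ) * Real.exp (-(1 / ε) ^ (d + η))
        ≤ Real.exp ((1 / ε) ^ (d + η)) * Real.exp (-(1 / ε) ^ (d + η)) := by
          gcongr
          exact (Real.le_exp_log _).trans (Real.exp_le_exp.2 hlog')
      _ = 1 := by rw [← Real.exp_add, add_neg_cancel, Real.exp_zero]
  exact (liminf_le_of_frequently_le' hle.frequently).trans_lt ENNReal.one_lt_top

lemma tendsto_half_nhdsGT_zero : Tendsto (· / 2) (𝓝[>] (0 : ℝ)) (𝓝[>] 0) := by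
  refine tendsto_nhdsWithin_of_tendsto_nhds_of_eventually_within _ ?_
    (eventually_nhdsWithin_of_forall fun _ hε => mem_Ioi.2 (half_pos hε))
  simpa using (tendsto_id.div_const (2 : ℝ)).mono_left (nhdsWithin_le_nhds (a := 0))

/-- if `X` is a compact metric space of upper Minkowski dimension at
most `d`, then `log N(W₂(X), ε) = O((1/ε)^t)` for every `t > d`, and hence the
upper Minkowski critical parameter (so also the critical parameter) of `W₂(X)` in
the power-exponential scale is at most `d`. -/
theorem stmt17 {X : Type*} [MetricSpace X] [CompactSpace X]
    [MeasurableSpace X] [BorelSpace X] (d : ℝ) (hd : 0 ≤ d)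
    (hdim : ∀ d' : ℝ, d < d' → ∀ᶠ ε in 𝓝[>] (0:ℝ),
      (coverNum (Set.univ : Set X) ε : ℝ) ≤ (1 / ε) ^ d') :
    (∀ t : ℝ, d < t → ∃ C : ℝ, 0 < C ∧ ∀ᶠ ε in 𝓝[>] (0:ℝ),
      Real.log (coverNumW X 2 ε) ≤ C * (1 / ε) ^ t) ∧
    sInf {s : ℝ | 0 < s ∧
        Filter.liminf (fun ε : ℝ =>
            (coverNumW X 2 ε : ℝ≥0∞) * ENNReal.ofReal (Real.exp (-(1 / ε) ^ s)))
          (𝓝[>] (0:ℝ)) < ⊤} ≤ d := by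
  have hlog : ∀ t : ℝ, d < t → ∃ C : ℝ, 0 < C ∧ ∀ᶠ ε in 𝓝[>] (0:ℝ),
      Real.log (coverNumW X 2 ε) ≤ C * (1 / ε) ^ t := by
    intro t ht
    obtain ⟨a, hda, hat⟩ : ∃ a, d < a ∧ a < t := ⟨(d + t) / 2, by linarith, by linarith⟩
    obtain ⟨δ, hδ, hexp⟩ : ∃ δ, 0 < δ ∧ a + (a + 2) * δ = t :=
      ⟨(t - a) / (a + 2), div_pos (by linarith) (by linarith),
        by rw [mul_div_cancel₀ _ (by linarith : a + 2 ≠ 0)]; ring⟩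
    refine ⟨(2 * (diam (univ : Set X) ^ 2 + 2)) ^ δ / δ * 2 ^ t, by positivity, ?_⟩
    filter_upwards [Ioo_mem_nhdsGT two_pos, tendsto_half_nhdsGT_zero.eventually (hdim a hda)]
      with ε hε hn
    calc Real.log (coverNumW X 2 ε)
        ≤ (2 * (diam (univ : Set X) ^ 2 + 2)) ^ δ / δ * (2 / ε) ^ (a + (a + 2) * δ) :=
          log_coverNumW_two_le hε.1 hε.2.le (hd.trans hda.le) hδ (by simpa [one_div_div] using hn)
      _ = _ := by
          rw [hexp, show 2 / ε = 2 * (1 / ε) by ring,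
            Real.mul_rpow two_pos.le (one_div_pos.2 hε.1).le]
          ring
  exact ⟨hlog, sInf_le_of_log_le hd fun t ht => (hlog t ht).imp fun C hC => hC.2⟩
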